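/- Let (Ψ_n) be an enumeration of ℚ with induced well-order ≼. Define χ on 3-element subsets {x₁, x₂, x₃} with x₁ < x₂ < x₃ by χ = 0 if x₁ ≼ x₂ and x₃ ≼ x₂, and χ = 1 otherwise. Then there is no infinite subset Λ ⊆ ℚ containing one of its limit points such that all 3-element subsets of Λ are colored 1. -/

import Mathlib

/-!
Call `x₂` a peak of the triple `x₁ < x₂ < x₃` when its enumeration index is at least those of
`x₁` and `x₃`; the triples coloured `0` are exactly the peaks. Only finitely many rationals have
index below a given bound, so if `r ∈ Λ` is a limit point of `Λ`, say from the left, and `a ∈ Λ`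
lies to the left of `r`, then some `y ∈ Λ` strictly between `a` and `r` has index above both,
and `a < y < r` is a peak.
-/

open Filter Topology Set

def PeakFree {α β : Type*} [LT α] [LE β] (ι : α → β) (Λ : Set α) : Prop :=
  ∀ ⦃x₁⦄, x₁ ∈ Λ → ∀ ⦃x₂⦄, x₂ ∈ Λ → ∀ ⦃x₃⦄, x₃ ∈ Λ → x₁ < x₂ → x₂ < x₃ →
    ¬(ι x₁ ≤ ι x₂ ∧ ι x₃ ≤ ι x₂)

namespace PeakFree

variable {α β : Type*} [LinearOrder α] [LinearOrder β] {ι : α → β} {Λ : Set α}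

theorem dual (hΛ : PeakFree ι Λ) : PeakFree (α := αᵒᵈ) ι Λ :=
  fun _ h₁ _ h₂ _ h₃ h₁₂ h₂₃ hpeak => hΛ h₃ h₂ h₁ h₂₃ h₁₂ hpeak.symm

variable [TopologicalSpace α] [OrderTopology α] {r : α}

theorem not_frequently_nhdsLT (hΛ : PeakFree ι Λ) (hι : Tendsto ι cofinite atTop) (hr : r ∈ Λ) :
    ¬∃ᶠ x in 𝓝[<] r, x ∈ Λ := by
  intro hfreq
  obtain ⟨a, ha, har⟩ := (hfreq.and_eventually self_mem_nhdsWithin).exists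
  have hlarge : ∀ᶠ x in 𝓝[<] r, max (ι a) (ι r) ≤ ι x :=
    (hι.mono_left ((nhdsWithin_mono r fun _ => ne_of_lt).trans (nhdsNE_le_cofinite r))).eventually
      (eventually_ge_atTop _)
  have hbetween : ∀ᶠ x in 𝓝[<] r, x ∈ Ioo a r := Ioo_mem_nhdsLT har
  obtain ⟨y, hy, ⟨hay, hyr⟩, hιy⟩ := (hfreq.and_eventually (hbetween.and hlarge)).exists
  exact hΛ ha hy hr hay hyr ⟨(le_max_left _ _).trans hιy, (le_max_right _ _).trans hιy⟩

theorem not_frequently_nhdsGT (hΛ : PeakFree ι Λ) (hι : Tendsto ι cofinite atTop) (hr : r ∈ Λ) :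
    ¬∃ᶠ x in 𝓝[>] r, x ∈ Λ :=
  hΛ.dual.not_frequently_nhdsLT (α := αᵒᵈ) hι hr

theorem not_frequently_nhdsNE (hΛ : PeakFree ι Λ) (hι : Tendsto ι cofinite atTop) (hr : r ∈ Λ) :
    ¬∃ᶠ x in 𝓝[≠] r, x ∈ Λ := by
  rw [← nhdsLT_sup_nhdsGT, frequently_sup]
  rintro (h | h)
  exacts [hΛ.not_frequently_nhdsLT hι hr h, hΛ.not_frequently_nhdsGT hι hr h]

end PeakFree

theorem frequently_nhdsNE_iff_abs_sub_lt {α : Type*} [TopologicalSpace α] [AddCommGroup α]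
    [LinearOrder α] [IsOrderedAddMonoid α] [OrderTopology α] [NoMaxOrder α] {s : Set α} {r : α} :
    (∃ᶠ y in 𝓝[≠] r, y ∈ s) ↔ ∀ ε, 0 < ε → ∃ y ∈ s, y ≠ r ∧ |y - r| < ε := by
  simp only [(nhdsWithin_hasBasis (nhds_basis_abs_sub_lt r) {r}ᶜ).frequently_iff,
    mem_inter_iff, mem_ofPred_eq, mem_compl_singleton_iff]
  exact forall₂_congr fun _ _ => ⟨fun ⟨y, ⟨hyε, hyr⟩, hy⟩ => ⟨y, hy, hyr, hyε⟩,
    fun ⟨y, hy, hyr, hyε⟩ => ⟨y, ⟨hyε, hyr⟩, hy⟩⟩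

theorem peakFree_of_triples_colored_one {Ψ : ℕ ≃ ℚ} {χ : Finset ℚ → ℕ}
    (hχ : ∀ x₁ x₂ x₃ : ℚ, x₁ < x₂ → x₂ < x₃ →
      χ {x₁, x₂, x₃} = if Ψ.symm x₁ ≤ Ψ.symm x₂ ∧ Ψ.symm x₃ ≤ Ψ.symm x₂ then 0 else 1)
    {Λ : Set ℚ} (hΛ : ∀ s : Finset ℚ, ↑s ⊆ Λ → s.card = 3 → χ s = 1) :
    PeakFree Ψ.symm Λ := by
  intro x₁ h₁ x₂ h₂ x₃ h₃ h₁₂ h₂₃ hpeak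
  have hsub : (↑({x₁, x₂, x₃} : Finset ℚ) : Set ℚ) ⊆ Λ := by
    simp only [Finset.coe_insert, Finset.coe_singleton, insert_subset_iff, singleton_subset_iff]
    exact ⟨h₁, h₂, h₃⟩
  have hcard : ({x₁, x₂, x₃} : Finset ℚ).card = 3 :=
    Finset.card_eq_three.mpr ⟨x₁, x₂, x₃, h₁₂.ne, (h₁₂.trans h₂₃).ne, h₂₃.ne, rfl⟩
  simpa [hχ x₁ x₂ x₃ h₁₂ h₂₃, hpeak] using hΛ _ hsub hcard

/-- for the enumeration-order coloring of triples of rationals, no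
infinite set containing one of its limit points has all triples colored 1. -/
theorem no_one_colored_set_with_limit_point
    (Ψ : ℕ ≃ ℚ) (χ : Finset ℚ → ℕ)
    (hχ : ∀ x₁ x₂ x₃ : ℚ, x₁ < x₂ → x₂ < x₃ →
      χ {x₁, x₂, x₃} = if Ψ.symm x₁ ≤ Ψ.symm x₂ ∧ Ψ.symm x₃ ≤ Ψ.symm x₂ then 0 else 1) :
    ¬ ∃ Λ : Set ℚ, Λ.Infinite ∧
      (∀ s : Finset ℚ, ↑s ⊆ Λ → s.card = 3 → χ s = 1) ∧
      ∃ r ∈ Λ, ∀ ε : ℚ, 0 < ε → ∃ y ∈ Λ, y ≠ r ∧ |y - r| < ε := by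
  rintro ⟨Λ, -, hone, r, hr, hacc⟩
  have hι : Tendsto Ψ.symm cofinite atTop :=
    Nat.cofinite_eq_atTop ▸ Ψ.symm.injective.tendsto_cofinite
  exact (peakFree_of_triples_colored_one hχ hone).not_frequently_nhdsNE hι hr
    (frequently_nhdsNE_iff_abs_sub_lt.mpr hacc)
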